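/- Let M : ℝⁿ → [0, ∞) be bounded on compact subsets of ℝⁿ, and let k > 0 and ρ > 1 be real numbers. If y ∈ ℝⁿ satisfies M(y) > 0, then there exists x ∈ ℝⁿ such that M(x) ≥ M(y) and M(z) ≤ ρ M(x) for all z in the closed ball of center x and radius k / M(x). -/

import Mathlib

/-!
If no point `x` with `M x ≥ M y` works, every such `x` has a point `z` at distance at most
`k / M x` with `M z > ρ M x`. Iterating from `y` gives a sequence along which `M` grows at least
like `ρ ^ n M y`, so the steps shrink geometrically and the sequence stays in a bounded set.
Its closure is compact, so `M` is bounded along the sequence: a contradiction.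
-/

open Set Metric Bornology Filter

theorem exists_seq_of_forall_mem_exists {α : Type*} {S : Set α} {R : α → α → Prop}
    (h : ∀ x ∈ S, ∃ z ∈ S, R x z) {y : α} (hy : y ∈ S) :
    ∃ u : ℕ → α, u 0 = y ∧ ∀ n, R (u n) (u (n + 1)) := by
  choose f hfS hfR using h
  let g : S → S := fun x => ⟨f x x.2, hfS x x.2⟩
  refine ⟨fun n => (g^[n] ⟨y, hy⟩ : α), rfl, fun n => ?_⟩
  simp only [Function.iterate_succ_apply']
  exact hfR _ _

section

variable {α : Type*} [PseudoMetricSpace α]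

theorem isBounded_range_of_dist_succ_le_div {u : ℕ → α} {M : α → ℝ} {k ρ : ℝ} (hk : 0 ≤ k)
    (hρ : 1 < ρ) (h0 : 0 < M (u 0)) (hM : ∀ n, ρ * M (u n) ≤ M (u (n + 1)))
    (hd : ∀ n, dist (u n) (u (n + 1)) ≤ k / M (u n)) : IsBounded (range u) := by
  refine (cauchySeq_of_le_geometric ρ⁻¹ (k / M (u 0)) (inv_lt_one_of_one_lt₀ hρ)
    fun n => ?_).isBounded_range
  have hgrowth : ρ ^ n * M (u 0) ≤ M (u n) := geom_le (by positivity) n fun j _ => hM j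
  calc dist (u n) (u (n + 1)) ≤ k / M (u n) := hd n
    _ ≤ k / (ρ ^ n * M (u 0)) := div_le_div_of_nonneg_left hk (by positivity) hgrowth
    _ = k / M (u 0) * ρ⁻¹ ^ n := by rw [inv_pow, mul_comm (ρ ^ n), div_mul_eq_div_div]; ring

theorem exists_le_forall_closedBall_le_mul [ProperSpace α] {M : α → ℝ}
    (hM : ∀ K, IsCompact K → BddAbove (M '' K)) {k ρ : ℝ} (hk : 0 ≤ k) (hρ : 1 < ρ) {y : α}
    (hy : 0 < M y) : ∃ x, M y ≤ M x ∧ ∀ z ∈ closedBall x (k / M x), M z ≤ ρ * M x := by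
  by_contra! h
  have hstep : ∀ x ∈ {x | M y ≤ M x}, ∃ z ∈ {x | M y ≤ M x},
      dist x z ≤ k / M x ∧ ρ * M x ≤ M z := by
    intro x (hx : M y ≤ M x)
    obtain ⟨z, hz, hlt⟩ := h x hx
    refine ⟨z, ?_, by rwa [dist_comm, ← mem_closedBall], hlt.le⟩
    calc M y ≤ M x := hx
      _ ≤ ρ * M x := le_mul_of_one_le_left (hy.trans_le hx).le hρ.le
      _ ≤ M z := hlt.le
  obtain ⟨u, rfl, hu⟩ := exists_seq_of_forall_mem_exists hstep (le_refl (M y))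
  have hbdd : IsBounded (range u) :=
    isBounded_range_of_dist_succ_le_div hk hρ hy (fun n => (hu n).2) fun n => (hu n).1
  have hMu : BddAbove (range (M ∘ u)) := by
    rw [range_comp]
    exact (hM _ hbdd.isCompact_closure).mono (image_mono subset_closure)
  exact not_bddAbove_of_tendsto_atTop (tendsto_atTop_of_geom_le hy hρ fun n => (hu n).2) hMu

end

theorem doubling_lemma_general (n : ℕ) (M : EuclideanSpace ℝ (Fin n) → ℝ)
    (hMb : ∀ K : Set (EuclideanSpace ℝ (Fin n)), IsCompact K → ∃ C : ℝ, ∀ x ∈ K, M x ≤ C)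
    (k ρ : ℝ) (hk : 0 < k) (hρ : 1 < ρ)
    (y : EuclideanSpace ℝ (Fin n)) (hy : 0 < M y) :
    ∃ x : EuclideanSpace ℝ (Fin n), M y ≤ M x ∧
      ∀ z ∈ Metric.closedBall x (k / M x), M z ≤ ρ * M x :=
  exists_le_forall_closedBall_le_mul
    (fun K hK => (hMb K hK).imp fun _ hC => forall_mem_image.2 hC) hk.le hρ hy

/-- Doubling-type lemma (variant of Poláčik–Quittner–Souplet): if `M : ℝⁿ → [0,∞)`
is bounded on compact sets, `k > 0`, `ρ > 1` and `M(y) > 0`, then there is `x` with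
`M(x) ≥ M(y)` such that `M ≤ ρ M(x)` on the closed ball of center `x` and
radius `k / M(x)`. -/
theorem doubling_lemma (n : ℕ) (M : EuclideanSpace ℝ (Fin n) → ℝ)
    (hM0 : ∀ x, 0 ≤ M x)
    (hMb : ∀ K : Set (EuclideanSpace ℝ (Fin n)), IsCompact K → ∃ C : ℝ, ∀ x ∈ K, M x ≤ C)
    (k ρ : ℝ) (hk : 0 < k) (hρ : 1 < ρ)
    (y : EuclideanSpace ℝ (Fin n)) (hy : 0 < M y) :
    ∃ x : EuclideanSpace ℝ (Fin n), M y ≤ M x ∧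
      ∀ z ∈ Metric.closedBall x (k / M x), M z ≤ ρ * M x :=
  doubling_lemma_general n M hMb k ρ hk hρ y hy
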